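/- If λ ∈ ℂ satisfies |λ − 16| > 64, then the strange fixed point z = 1 of O_p(·,λ) is an attractor but not a superattractor: the complex derivative of z ↦ O_p(z,λ) at z = 1 has modulus strictly less than 1 and is nonzero. -/

import Mathlib

/-!
Writing `O_p(z,λ) = N(z)/D(z)` with `N = z⁴((1+z)⁴ − λ)` and `D = (1+z)⁴ − λz⁴`, the fixed-point
equation `N(1) = D(1)` turns the quotient rule at `1` into `(N'(1) − D'(1))/D(1)`. In the
difference of the derivatives `λ` cancels, leaving the multiplier `64/(16 − λ)`.
-/

/-- The rational operator of Kim's family (η = μ = 0, parameter `lam`) on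
quadratic polynomials, after Möbius conjugation:
`O_p(z,λ) = −z⁴((1−λ)+4z+6z²+4z³+z⁴)/(−1−4z−6z²−4z³+(λ−1)z⁴)`. -/
noncomputable def Op (lam z : ℂ) : ℂ :=
  -z ^ 4 * ((1 - lam) + 4 * z + 6 * z ^ 2 + 4 * z ^ 3 + z ^ 4) /
    (-1 - 4 * z - 6 * z ^ 2 - 4 * z ^ 3 + (lam - 1) * z ^ 4)

theorem HasDerivAt.div_of_eq_mul {𝕜 : Type*} [NontriviallyNormedField 𝕜] {N D : 𝕜 → 𝕜}
    {N' D' p : 𝕜} (hN : HasDerivAt N N' p) (hD : HasDerivAt D D' p) (hD₀ : D p ≠ 0)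
    (hfix : N p = p * D p) :
    HasDerivAt (fun z => N z / D z) ((N' - p * D') / D p) p :=
  (hN.div hD hD₀).congr_deriv (by rw [hfix]; field_simp)

theorem Op_eq (lam z : ℂ) :
    Op lam z = z ^ 4 * ((1 + z) ^ 4 - lam) / ((1 + z) ^ 4 - lam * z ^ 4) := by
  rw [Op, ← neg_div_neg_eq]
  ring_nf

theorem hasDerivAt_Op_one (lam : ℂ) (hlam : lam ≠ 16) :
    HasDerivAt (fun z => Op lam z) (64 / (16 - lam)) 1 := by
  have hN : HasDerivAt (fun z : ℂ => z ^ 4 * ((1 + z) ^ 4 - lam)) (4 * (16 - lam) + 32) 1 := by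
    refine ((hasDerivAt_pow 4 (1 : ℂ)).mul
      ((((hasDerivAt_id (1 : ℂ)).const_add 1).pow 4).sub_const lam)).congr_deriv ?_
    norm_num
  have hD : HasDerivAt (fun z : ℂ => (1 + z) ^ 4 - lam * z ^ 4) (32 - 4 * lam) 1 := by
    refine ((((hasDerivAt_id (1 : ℂ)).const_add 1).pow 4).sub
      ((hasDerivAt_pow 4 (1 : ℂ)).const_mul lam)).congr_deriv ?_
    norm_num
    ring
  have hD₁ : (1 + 1 : ℂ) ^ 4 - lam * 1 ^ 4 ≠ 0 := by
    norm_num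
    exact sub_ne_zero.mpr (Ne.symm hlam)
  simp_rw [Op_eq]
  refine (hN.div_of_eq_mul hD hD₁ (by ring)).congr_deriv ?_
  norm_num
  ring

/-- If `|λ − 16| > 64` then `z = 1` is an attracting but not superattracting
fixed point of `O_p(·,λ)`. -/
theorem one_attractor (lam : ℂ) (hlam : ‖lam - 16‖ > 64) :
    ‖deriv (fun z => Op lam z) 1‖ < 1 ∧
      deriv (fun z => Op lam z) 1 ≠ 0 := by
  have hdist : 64 < ‖16 - lam‖ := by rwa [norm_sub_rev]
  have hne : 16 - lam ≠ 0 := norm_pos_iff.mp (by linarith)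
  rw [(hasDerivAt_Op_one lam (sub_ne_zero.mp hne).symm).deriv]
  refine ⟨?_, div_ne_zero (by norm_num) hne⟩
  rw [norm_div, div_lt_one (by linarith)]
  simpa using hdist
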